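/- arXiv:2207.08216 — 3 statements merged into one kernel-verified Lean document; each statement's English description precedes it below -/
import Mathlib

section
/- Suppose A has full column rank. Then for arbitrary but fixed c ∈ ℝ^ℓ and μ, λ > 0, the function f_joint(x,y) = (1/2)‖Ax − b‖₂² + (λ²/2)‖Dx − y + c‖₂² + μ‖y‖₁ is strictly convex on ℝ^n × ℝ^ℓ. -/
/-!
The two quadratic terms are a strictly convex function of the residual pair
`(A x - b, D x - y + c)`, and the map `(x, y) ↦ (A x - b, D x - y + c)` is affine and injective:
equal residuals force `A x = A x'`, hence `x = x'` by full column rank, and then `y = y'`.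
Strict convexity survives composition with an injective affine map and addition of the convex
`ℓ₁` term.
-/

open Matrix BigOperators

noncomputable def fjoint {m n l : ℕ} (A : Matrix (Fin m) (Fin n) ℝ) (b : Fin m → ℝ)
    (D : Matrix (Fin l) (Fin n) ℝ) (c : Fin l → ℝ) (μ lam : ℝ)
    (x : Fin n → ℝ) (y : Fin l → ℝ) : ℝ :=
  (1/2) * ∑ i, (A.mulVec x i - b i)^2
    + (lam^2/2) * ∑ i, (D.mulVec x i - y i + c i)^2
    + μ * ∑ i, |y i|

open Set Function

theorem StrictConvexOn.comp_affineMap_of_injective {𝕜 E F β : Type*} [Ring 𝕜] [PartialOrder 𝕜]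
    [AddCommGroup E] [Module 𝕜 E] [AddCommGroup F] [Module 𝕜 F]
    [AddCommMonoid β] [PartialOrder β] [SMul 𝕜 β] {f : F → β} {s : Set F}
    (hf : StrictConvexOn 𝕜 s f) (g : E →ᵃ[𝕜] F) (hg : Injective g) :
    StrictConvexOn 𝕜 (g ⁻¹' s) (f ∘ g) :=
  ⟨hf.1.affine_preimage g, fun x hx y hy hxy a b ha hb hab => by
    simpa only [Function.comp_apply, Convex.combo_affine_apply hab] using
      hf.2 hx hy (hg.ne hxy) ha hb hab⟩

theorem StrictConvexOn.prod_add {𝕜 E F β : Type*} [Semiring 𝕜] [PartialOrder 𝕜]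
    [AddCommMonoid E] [Module 𝕜 E] [AddCommMonoid F] [Module 𝕜 F]
    [AddCommMonoid β] [PartialOrder β] [IsOrderedCancelAddMonoid β] [Module 𝕜 β]
    {f : E → β} {g : F → β} {s : Set E} {t : Set F}
    (hf : StrictConvexOn 𝕜 s f) (hg : StrictConvexOn 𝕜 t g) :
    StrictConvexOn 𝕜 (s ×ˢ t) (fun p => f p.1 + g p.2) := by
  refine ⟨hf.1.prod hg.1, fun p hp q hq hpq a b ha hb hab => ?_⟩
  rw [smul_add, smul_add, add_add_add_comm]
  by_cases h₁ : p.1 = q.1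
  · have h₂ : p.2 ≠ q.2 := fun h₂ => hpq (Prod.ext h₁ h₂)
    exact add_lt_add_of_le_of_lt (hf.convexOn.2 hp.1 hq.1 ha.le hb.le hab)
      (hg.2 hp.2 hq.2 h₂ ha hb hab)
  · exact add_lt_add_of_lt_of_le (hf.2 hp.1 hq.1 h₁ ha hb hab)
      (hg.convexOn.2 hp.2 hq.2 ha.le hb.le hab)

theorem strictConvexOn_univ_mul_sum_sq {ι : Type*} [Fintype ι] {w : ℝ} (hw : 0 < w) :
    StrictConvexOn ℝ univ (fun u : ι → ℝ => w * ∑ i, u i ^ 2) := by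
  have hnorm : StrictConvexOn ℝ univ (fun u : EuclideanSpace ℝ ι => w * ‖u‖ ^ 2) := by
    refine StrongConvexOn.strictConvexOn (m := 2 * w) ?_ (by positivity)
    rw [strongConvexOn_iff_convex]
    exact (convexOn_const 0 convex_univ).congr fun u _ => by ring
  simpa [Function.comp_def, EuclideanSpace.real_norm_sq_eq] using
    hnorm.comp_affineMap_of_injective (WithLp.linearEquiv 2 ℝ (ι → ℝ)).symm.toLinearMap.toAffineMap
      (WithLp.linearEquiv 2 ℝ (ι → ℝ)).symm.injective

theorem convexOn_univ_sum_abs {ι : Type*} [Fintype ι] :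
    ConvexOn ℝ univ (fun u : ι → ℝ => ∑ i, |u i|) := by
  simpa [Function.comp_def, PiLp.norm_eq_of_L1] using
    (convexOn_norm convex_univ).comp_linearMap (WithLp.linearEquiv 1 ℝ (ι → ℝ)).symm.toLinearMap

section Residual

variable {m n l : Type*} [Fintype n] (A : Matrix m n ℝ) (b : m → ℝ) (D : Matrix l n ℝ) (c : l → ℝ)

noncomputable def jointResidual : (n → ℝ) × (l → ℝ) →ᵃ[ℝ] (m → ℝ) × (l → ℝ) :=
  ((A.mulVecLin ∘ₗ LinearMap.fst ℝ _ _).prod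
      (D.mulVecLin ∘ₗ LinearMap.fst ℝ _ _ - LinearMap.snd ℝ _ _)).toAffineMap +
    AffineMap.const ℝ _ (-b, c)

@[simp]
theorem jointResidual_apply (p : (n → ℝ) × (l → ℝ)) :
    jointResidual A b D c p = (A *ᵥ p.1 - b, D *ᵥ p.1 - p.2 + c) := by
  simp [jointResidual, sub_eq_add_neg]

variable {A} in
theorem jointResidual_injective (hA : Injective A.mulVec) : Injective (jointResidual A b D c) := by
  rintro ⟨x, y⟩ ⟨x', y'⟩ h
  simp only [jointResidual_apply, Prod.mk.injEq, sub_left_inj, add_left_inj] at h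
  obtain ⟨hx, hy⟩ := h
  obtain rfl := hA hx
  simpa using hy

end Residual

theorem stmt0 {m n l : ℕ} (A : Matrix (Fin m) (Fin n) ℝ) (b : Fin m → ℝ)
    (D : Matrix (Fin l) (Fin n) ℝ) (c : Fin l → ℝ) (μ lam : ℝ)
    (hμ : 0 < μ) (hlam : 0 < lam)
    (hA : ∀ x : Fin n → ℝ, A.mulVec x = 0 → x = 0) :
    StrictConvexOn ℝ (Set.univ : Set ((Fin n → ℝ) × (Fin l → ℝ)))
      (fun p => fjoint A b D c μ lam p.1 p.2) := by
  have hAinj : Injective A.mulVec := (injective_iff_map_eq_zero A.mulVecLin).2 hA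
  have hquad : StrictConvexOn ℝ univ
      (fun r : (Fin m → ℝ) × (Fin l → ℝ) =>
        1 / 2 * ∑ i, r.1 i ^ 2 + lam ^ 2 / 2 * ∑ i, r.2 i ^ 2) := by
    simpa only [univ_prod_univ] using
      (strictConvexOn_univ_mul_sum_sq (by norm_num)).prod_add
        (strictConvexOn_univ_mul_sum_sq (by positivity))
  have hl1 : ConvexOn ℝ univ (fun p : (Fin n → ℝ) × (Fin l → ℝ) => μ * ∑ i, |p.2 i|) :=
    (convexOn_univ_sum_abs.comp_linearMap (LinearMap.snd ℝ _ _)).smul hμ.le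
  refine ((hquad.comp_affineMap_of_injective _ (jointResidual_injective b D c hAinj)).add_convexOn
    hl1).congr fun p _ => ?_
  simp [fjoint]
end

section
/- Suppose A has full column rank. Then for arbitrary but fixed c ∈ ℝ^ℓ and μ, λ > 0, the function f_joint has a unique global minimizer: there exists exactly one pair (x̂, ŷ) ∈ ℝ^n × ℝ^ℓ such that f_joint(x̂, ŷ) ≤ f_joint(x, y) for all (x, y) ∈ ℝ^n × ℝ^ℓ. -/
/-!
The existence of a minimizer follows from continuity and coercivity: the first term of `fjoint`
tends to infinity as `x` does because `A` is injective, and the `ℓ¹` term does so as `y` does.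
The two quadratic terms are a positively weighted sum of squares of the residuals of the
injective linear map `(x, y) ↦ (A x, D x - y)`, hence strictly convex; adding the convex `ℓ¹`
term keeps `fjoint` strictly convex, so its minimizer is unique.
-/

open Matrix BigOperators

open Filter Function Set

section SumOfSquares

variable {ι : Type*} [Fintype ι]

lemma norm_sq_le_sum_sq (w : ι → ℝ) : ‖w‖ ^ 2 ≤ ∑ i, w i ^ 2 := by
  have hsum : 0 ≤ ∑ i, w i ^ 2 := Finset.sum_nonneg fun _ _ => sq_nonneg _
  have : ‖w‖ ≤ √(∑ i, w i ^ 2) :=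
    (pi_norm_le_iff_of_nonneg (Real.sqrt_nonneg _)).2 fun i =>
      Real.abs_le_sqrt (Finset.single_le_sum (fun j _ => sq_nonneg (w j)) (Finset.mem_univ i))
  exact (Real.le_sqrt (norm_nonneg _) hsum).1 this

lemma norm_le_sum_abs (w : ι → ℝ) : ‖w‖ ≤ ∑ i, |w i| :=
  (pi_norm_le_iff_of_nonneg (Finset.sum_nonneg fun _ _ => abs_nonneg _)).2 fun i =>
    Finset.single_le_sum (fun j _ => abs_nonneg (w j)) (Finset.mem_univ i)

lemma tendsto_sum_abs_cocompact_atTop :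
    Tendsto (fun w : ι → ℝ => ∑ i, |w i|) (cocompact _) atTop :=
  tendsto_atTop_mono norm_le_sum_abs tendsto_norm_cocompact_atTop

lemma tendsto_sum_sq_sub_comp_cocompact_atTop {E : Type*} [NormedAddCommGroup E]
    [NormedSpace ℝ E] [FiniteDimensional ℝ E] {L : E →ₗ[ℝ] ι → ℝ} (hL : Injective L)
    (v : ι → ℝ) : Tendsto (fun x => ∑ i, (L x i - v i) ^ 2) (cocompact E) atTop := by
  have hshift : Tendsto (fun x => L x - v) (cocompact E) (cocompact (ι → ℝ)) :=
    ((Homeomorph.subRight v).isClosedEmbedding.comp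
      (LinearMap.isClosedEmbedding_of_injective (LinearMap.ker_eq_bot.2 hL))).tendsto_cocompact
  have hsq : Tendsto (fun w : ι → ℝ => ‖w‖ ^ 2) (cocompact _) atTop :=
    (tendsto_pow_atTop two_ne_zero).comp tendsto_norm_cocompact_atTop
  exact tendsto_atTop_mono (fun x => norm_sq_le_sum_sq (L x - v)) (hsq.comp hshift)

lemma convexOn_sum_abs : ConvexOn ℝ univ (fun w : ι → ℝ => ∑ i, |w i|) := by
  refine ⟨convex_univ, fun u _ w _ a b ha hb _ => ?_⟩
  simp only [Pi.add_apply, Pi.smul_apply, smul_eq_mul, Finset.mul_sum, ← Finset.sum_add_distrib]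
  gcongr with i
  calc |a * u i + b * w i| ≤ |a * u i| + |b * w i| := abs_add_le _ _
    _ = a * |u i| + b * |w i| := by rw [abs_mul, abs_mul, abs_of_nonneg ha, abs_of_nonneg hb]

lemma strictConvexOn_sum_mul_sq_sub_comp {E : Type*} [AddCommGroup E] [Module ℝ E]
    {L : E →ₗ[ℝ] ι → ℝ} (hL : Injective L) {w : ι → ℝ} (hw : ∀ i, 0 < w i) (v : ι → ℝ) :
    StrictConvexOn ℝ univ (fun p => ∑ i, w i * (L p i - v i) ^ 2) := by
  refine ⟨convex_univ, fun p _ q _ hpq a b ha hb hab => ?_⟩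
  obtain rfl : b = 1 - a := by linarith
  have hgap : 0 < ∑ i, w i * (L p i - L q i) ^ 2 := by
    obtain ⟨i, hi⟩ := Function.ne_iff.1 (hL.ne hpq)
    have := sub_ne_zero.2 hi
    exact Finset.sum_pos' (fun j _ => by have := hw j; positivity)
      ⟨i, Finset.mem_univ i, by have := hw i; positivity⟩
  -- `(a s + (1 - a) t)² = a s² + (1 - a) t² - a (1 - a) (s - t)²`
  have hcomb : ∀ i, w i * (L (a • p + (1 - a) • q) i - v i) ^ 2
      = a * (w i * (L p i - v i) ^ 2) + (1 - a) * (w i * (L q i - v i) ^ 2)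
        - a * (1 - a) * (w i * (L p i - L q i) ^ 2) := by
    intro i
    simp only [map_add, map_smul, Pi.add_apply, Pi.smul_apply, smul_eq_mul]
    ring
  simp only [hcomb, Finset.sum_sub_distrib, Finset.sum_add_distrib, ← Finset.mul_sum, smul_eq_mul]
  nlinarith [mul_pos (mul_pos ha hb) hgap]

end SumOfSquares

section Fjoint

variable {m n l : ℕ} (A : Matrix (Fin m) (Fin n) ℝ) (b : Fin m → ℝ)
  (D : Matrix (Fin l) (Fin n) ℝ) (c : Fin l → ℝ) (μ lam : ℝ)

def fjointResidualMap : (Fin n → ℝ) × (Fin l → ℝ) →ₗ[ℝ] (Fin m ⊕ Fin l → ℝ) where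
  toFun p := Sum.elim (A *ᵥ p.1) (D *ᵥ p.1 - p.2)
  map_add' p q := by ext (i | i) <;> simp [mulVec_add]; ring
  map_smul' r p := by ext (i | i) <;> simp [mulVec_smul]; ring

variable {A} in
lemma fjointResidualMap_injective (hA : Injective A.mulVec) :
    Injective (fjointResidualMap A D) := by
  refine (injective_iff_map_eq_zero _).2 fun ⟨x, y⟩ hp => ?_
  have hx : A *ᵥ x = 0 := funext fun i => congrFun hp (.inl i)
  have hy : D *ᵥ x - y = 0 := funext fun i => congrFun hp (.inr i)
  obtain rfl : x = 0 := hA (hx.trans (mulVec_zero A).symm)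
  simpa using hy

lemma fjoint_eq_sum_residual (x : Fin n → ℝ) (y : Fin l → ℝ) :
    fjoint A b D c μ lam x y
      = ∑ i, Sum.elim (fun _ => 1 / 2) (fun _ => lam ^ 2 / 2) i
          * (fjointResidualMap A D (x, y) i - Sum.elim b (-c) i) ^ 2
        + μ * ∑ i, |y i| := by
  simp [fjoint, fjointResidualMap, Fintype.sum_sum_type, Finset.mul_sum, sub_neg_eq_add]

variable {A μ lam} in
lemma strictConvexOn_fjoint (hμ : 0 ≤ μ) (hlam : lam ≠ 0) (hA : Injective A.mulVec) :
    StrictConvexOn ℝ univ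
      (fun p : (Fin n → ℝ) × (Fin l → ℝ) => fjoint A b D c μ lam p.1 p.2) := by
  have hquad := strictConvexOn_sum_mul_sq_sub_comp (fjointResidualMap_injective D hA)
    (w := Sum.elim (fun _ => 1 / 2) (fun _ => lam ^ 2 / 2))
    (by rintro (i | i) <;> simp [sq_pos_of_ne_zero hlam]) (Sum.elim b (-c))
  have hl1 := (convexOn_sum_abs.comp_linearMap (LinearMap.snd ℝ (Fin n → ℝ) (Fin l → ℝ))).smul hμ
  refine (hquad.add_convexOn (by simpa using hl1)).congr fun p _ => ?_
  exact (fjoint_eq_sum_residual A b D c μ lam p.1 p.2).symm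

lemma continuous_fjoint :
    Continuous (fun p : (Fin n → ℝ) × (Fin l → ℝ) => fjoint A b D c μ lam p.1 p.2) := by
  unfold fjoint mulVec dotProduct
  fun_prop

variable {μ} in
lemma half_mul_sum_sq_le_fjoint (hμ : 0 ≤ μ) (x : Fin n → ℝ) (y : Fin l → ℝ) :
    1 / 2 * ∑ i, ((A *ᵥ x) i - b i) ^ 2 ≤ fjoint A b D c μ lam x y := by
  unfold fjoint
  have : 0 ≤ μ * ∑ i, |y i| := by positivity
  have : 0 ≤ lam ^ 2 / 2 * ∑ i, ((D *ᵥ x) i - y i + c i) ^ 2 := by positivity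
  linarith

lemma mul_sum_abs_le_fjoint (x : Fin n → ℝ) (y : Fin l → ℝ) :
    μ * ∑ i, |y i| ≤ fjoint A b D c μ lam x y := by
  unfold fjoint
  have : 0 ≤ 1 / 2 * ∑ i, ((A *ᵥ x) i - b i) ^ 2 := by positivity
  have : 0 ≤ lam ^ 2 / 2 * ∑ i, ((D *ᵥ x) i - y i + c i) ^ 2 := by positivity
  linarith

variable {A μ} in
lemma tendsto_fjoint_cocompact_atTop (hμ : 0 < μ) (hA : Injective A.mulVec) :
    Tendsto (fun p : (Fin n → ℝ) × (Fin l → ℝ) => fjoint A b D c μ lam p.1 p.2)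
      (cocompact _) atTop := by
  rw [← coprod_cocompact]
  refine tendsto_sup.2 ⟨?_, ?_⟩
  · have hx := (tendsto_sum_sq_sub_comp_cocompact_atTop (L := A.mulVecLin) hA b).const_mul_atTop
      (one_half_pos (α := ℝ))
    exact tendsto_atTop_mono (fun p => half_mul_sum_sq_le_fjoint A b D c lam hμ.le p.1 p.2)
      (hx.comp tendsto_comap)
  · exact tendsto_atTop_mono (fun p => mul_sum_abs_le_fjoint A b D c μ lam p.1 p.2)
      ((tendsto_sum_abs_cocompact_atTop.const_mul_atTop hμ).comp tendsto_comap)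

end Fjoint

theorem stmt1 {m n l : ℕ} (A : Matrix (Fin m) (Fin n) ℝ) (b : Fin m → ℝ)
    (D : Matrix (Fin l) (Fin n) ℝ) (c : Fin l → ℝ) (μ lam : ℝ)
    (hμ : 0 < μ) (hlam : 0 < lam)
    (hA : ∀ x : Fin n → ℝ, A.mulVec x = 0 → x = 0) :
    ∃! p : (Fin n → ℝ) × (Fin l → ℝ),
      ∀ q : (Fin n → ℝ) × (Fin l → ℝ),
        fjoint A b D c μ lam p.1 p.2 ≤ fjoint A b D c μ lam q.1 q.2 := by
  have hA' : Injective A.mulVec := (injective_iff_map_eq_zero A.mulVecLin).2 hA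
  obtain ⟨p, hp⟩ := (continuous_fjoint A b D c μ lam).exists_forall_le
    (tendsto_fjoint_cocompact_atTop b D c lam hμ hA')
  refine ⟨p, hp, fun q hq => ?_⟩
  exact (strictConvexOn_fjoint b D c hμ.le hlam.ne' hA').eq_of_isMinOn
    (isMinOn_univ_iff.2 hq) (isMinOn_univ_iff.2 hp) trivial trivial
end

section
/- Suppose A has full column rank and let (x̂, ŷ) be the unique global minimizer of f_joint on ℝ^n × ℝ^ℓ. Then x̂ is the unique global minimizer of f_proj on ℝ^n: f_proj(x̂) ≤ f_proj(x) for all x ∈ ℝ^n, and any x̄ ∈ ℝ^n with f_proj(x̄) = f_proj(x̂) satisfies x̄ = x̂. -/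
/-!
Coordinatewise, `shrinkZ x` is soft thresholding of `D x + c` at level `μ / λ²`, the proximal map
of `(μ / λ²) |·|`; hence `shrinkZ x` minimizes `fjoint x ·` and `fproj x = min_y fjoint x y`.
Minimizing out a variable preserves minimizers: `fproj` is minimized exactly at the `x`-parts of
minimizers of `fjoint`.
-/

open Matrix BigOperators

noncomputable def shrinkZ {n l : ℕ} (D : Matrix (Fin l) (Fin n) ℝ) (c : Fin l → ℝ)
    (μ lam : ℝ) (x : Fin n → ℝ) : Fin l → ℝ :=
  fun i => Real.sign (D.mulVec x i + c i) * max (|D.mulVec x i + c i| - μ / lam^2) 0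

noncomputable def fproj {m n l : ℕ} (A : Matrix (Fin m) (Fin n) ℝ) (b : Fin m → ℝ)
    (D : Matrix (Fin l) (Fin n) ℝ) (c : Fin l → ℝ) (μ lam : ℝ)
    (x : Fin n → ℝ) : ℝ :=
  fjoint A b D c μ lam x (shrinkZ D c μ lam x)

noncomputable def softThreshold (κ t : ℝ) : ℝ :=
  Real.sign t * max (|t| - κ) 0

theorem shrinkZ_apply {n l : ℕ} (D : Matrix (Fin l) (Fin n) ℝ) (c : Fin l → ℝ) (μ lam : ℝ)
    (x : Fin n → ℝ) (i : Fin l) :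
    shrinkZ D c μ lam x i = softThreshold (μ / lam ^ 2) ((D *ᵥ x) i + c i) :=
  rfl

theorem softThreshold_le {κ : ℝ} (hκ : 0 ≤ κ) (t y : ℝ) :
    (t - softThreshold κ t) ^ 2 / 2 + κ * |softThreshold κ t| ≤ (t - y) ^ 2 / 2 + κ * |y| := by
  unfold softThreshold
  rcases le_or_gt |t| κ with hsmall | hlarge
  · rw [max_eq_right (by linarith), mul_zero, sub_zero, abs_zero, mul_zero, add_zero]
    have hty : t * y ≤ |t| * |y| := by rw [← abs_mul]; exact le_abs_self _
    nlinarith [mul_le_mul_of_nonneg_right hsmall (abs_nonneg y), sq_nonneg y]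
  · rw [max_eq_left (by linarith)]
    rcases lt_trichotomy t 0 with hneg | hzero | hpos
    · rw [Real.sign_of_neg hneg, abs_of_neg hneg] at *
      rw [abs_of_nonpos (by linarith)]
      nlinarith [sq_nonneg (y - t - κ), neg_abs_le y]
    · simp only [hzero, abs_zero] at hlarge; linarith
    · rw [Real.sign_of_pos hpos, abs_of_pos hpos] at *
      rw [abs_of_nonneg (by linarith)]
      nlinarith [sq_nonneg (y - t + κ), le_abs_self y]

theorem fproj_le_fjoint {m n l : ℕ} (A : Matrix (Fin m) (Fin n) ℝ) (b : Fin m → ℝ)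
    (D : Matrix (Fin l) (Fin n) ℝ) (c : Fin l → ℝ) {μ lam : ℝ} (hμ : 0 ≤ μ) (hlam : lam ≠ 0)
    (x : Fin n → ℝ) (y : Fin l → ℝ) :
    fproj A b D c μ lam x ≤ fjoint A b D c μ lam x y := by
  have hlam2 : 0 < lam ^ 2 := by positivity
  have hterm : ∀ i, lam ^ 2 / 2 * ((D *ᵥ x) i - shrinkZ D c μ lam x i + c i) ^ 2
      + μ * |shrinkZ D c μ lam x i| ≤ lam ^ 2 / 2 * ((D *ᵥ x) i - y i + c i) ^ 2 + μ * |y i| := by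
    intro i
    have h := softThreshold_le (div_nonneg hμ hlam2.le) ((D *ᵥ x) i + c i) (y i)
    rw [← shrinkZ_apply] at h
    calc _ = lam ^ 2 * (((D *ᵥ x) i + c i - shrinkZ D c μ lam x i) ^ 2 / 2
              + μ / lam ^ 2 * |shrinkZ D c μ lam x i|) := by field_simp; ring
      _ ≤ lam ^ 2 * (((D *ᵥ x) i + c i - y i) ^ 2 / 2 + μ / lam ^ 2 * |y i|) := by gcongr
      _ = _ := by field_simp; ring
  have hsum := Finset.sum_le_sum fun i (_ : i ∈ Finset.univ) => hterm i
  simp only [Finset.sum_add_distrib, ← Finset.mul_sum] at hsum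
  unfold fproj fjoint
  linarith

section PartialMinimization

variable {α β γ : Type*} [Preorder γ] {F : α → β → γ} {Z : α → β} {x₀ : α} {y₀ : β}

theorem le_of_isPartialArgmin (hZ : ∀ x y, F x (Z x) ≤ F x y) (hmin : ∀ x y, F x₀ y₀ ≤ F x y)
    (x : α) : F x₀ (Z x₀) ≤ F x (Z x) :=
  (hZ x₀ y₀).trans (hmin x (Z x))

theorem eq_of_isPartialArgmin (hZ : ∀ x y, F x (Z x) ≤ F x y) (hmin : ∀ x y, F x₀ y₀ ≤ F x y)
    (huniq : ∀ x y, (∀ x' y', F x y ≤ F x' y') → x = x₀ ∧ y = y₀)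
    {x : α} (hx : F x (Z x) = F x₀ (Z x₀)) : x = x₀ :=
  (huniq x (Z x) fun x' y' => hx.le.trans ((hZ x₀ y₀).trans (hmin x' y'))).1

end PartialMinimization

theorem stmt7_general {m n l : ℕ} (A : Matrix (Fin m) (Fin n) ℝ) (b : Fin m → ℝ)
    (D : Matrix (Fin l) (Fin n) ℝ) (c : Fin l → ℝ) (μ lam : ℝ)
    (hμ : 0 < μ) (hlam : 0 < lam)
    (xh : Fin n → ℝ) (yh : Fin l → ℝ)
    (hmin : ∀ (x : Fin n → ℝ) (y : Fin l → ℝ),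
      fjoint A b D c μ lam xh yh ≤ fjoint A b D c μ lam x y)
    (huniq : ∀ (x : Fin n → ℝ) (y : Fin l → ℝ),
      (∀ (x' : Fin n → ℝ) (y' : Fin l → ℝ),
        fjoint A b D c μ lam x y ≤ fjoint A b D c μ lam x' y') →
      x = xh ∧ y = yh) :
    (∀ x : Fin n → ℝ, fproj A b D c μ lam xh ≤ fproj A b D c μ lam x)
    ∧ ∀ xb : Fin n → ℝ, fproj A b D c μ lam xb = fproj A b D c μ lam xh → xb = xh := by
  have hZ := fproj_le_fjoint A b D c hμ.le hlam.ne'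
  exact ⟨le_of_isPartialArgmin hZ hmin, fun _ => eq_of_isPartialArgmin hZ hmin huniq⟩

theorem stmt7 {m n l : ℕ} (A : Matrix (Fin m) (Fin n) ℝ) (b : Fin m → ℝ)
    (D : Matrix (Fin l) (Fin n) ℝ) (c : Fin l → ℝ) (μ lam : ℝ)
    (hμ : 0 < μ) (hlam : 0 < lam)
    (hA : ∀ x : Fin n → ℝ, A.mulVec x = 0 → x = 0)
    (xh : Fin n → ℝ) (yh : Fin l → ℝ)
    (hmin : ∀ (x : Fin n → ℝ) (y : Fin l → ℝ),
      fjoint A b D c μ lam xh yh ≤ fjoint A b D c μ lam x y)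
    (huniq : ∀ (x : Fin n → ℝ) (y : Fin l → ℝ),
      (∀ (x' : Fin n → ℝ) (y' : Fin l → ℝ),
        fjoint A b D c μ lam x y ≤ fjoint A b D c μ lam x' y') →
      x = xh ∧ y = yh) :
    (∀ x : Fin n → ℝ, fproj A b D c μ lam xh ≤ fproj A b D c μ lam x)
    ∧ ∀ xb : Fin n → ℝ, fproj A b D c μ lam xb = fproj A b D c μ lam xh → xb = xh :=
  stmt7_general A b D c μ lam hμ hlam xh yh hmin huniq
end
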